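/- arXiv:2109.07302 — 3 statements merged into one kernel-verified Lean document; each statement's English description precedes it below -/
import Mathlib

section
/- The AND₂ gadget graph (two input gates of 2 vertices each, a middle layer of 4 vertices encoding XOR, and one output gate of 2 vertices, connected as: input-pair bits (x,y) with x⊕y = z wired to middle vertices and middle vertex (encoding output bit z) adjacent to output vertex z) admits, for each input gate, an automorphism that swaps the two vertices of that input gate and the two output vertices while fixing both vertices of the other input gate. -/
/-- Edge list of the AND₂ gadget: b₀,b₁ = 0,1 (input gate 1), b₂,b₃ = 2,3 (input gate 2),
c₀..c₃ = 4..7 (middle layer), a₀,a₁ = 8,9 (output gate). -/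
def andEdges : List (Fin 10 × Fin 10) :=
  [(0,4),(0,6),(1,5),(1,7),(2,5),(2,6),(3,4),(3,7),(4,8),(5,8),(6,9),(7,9)]

/-- The AND₂ gadget graph. -/
def andGadget : SimpleGraph (Fin 10) where
  Adj x y := x ≠ y ∧ ((x, y) ∈ andEdges ∨ (y, x) ∈ andEdges)
  symm := ⟨fun _ _ h => ⟨h.1.symm, h.2.symm⟩⟩
  loopless := ⟨fun _ h => h.1 rfl⟩

/-- Gate coloring of the AND₂ gadget: input gate 1, input gate 2, middle, output. -/
def andColor : Fin 10 → Fin 4 := ![0, 0, 1, 1, 2, 2, 2, 2, 3, 3]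

/-!
Write the middle vertex joined to input vertices `b_x` and `b_{2+y}` as `c(x, y)`; it is joined to
the output `a₀` when `x ≠ y` and to `a₁` when `x = y`. Flipping the bit of one input gate therefore
permutes the middle layer (`c₀ ↔ c₃`, `c₁ ↔ c₂` for the first gate, `c₀ ↔ c₂`, `c₁ ↔ c₃` for the
second) and exchanges `a₀` and `a₁`, giving a colour-preserving automorphism. Swapping `c₀ ↔ c₁`,
`c₂ ↔ c₃` instead does not work: it sends the edge `b₂c₁` to the non-edge `b₂c₀`.
-/

open Equiv

instance : DecidableRel andGadget.Adj := fun x y =>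
  inferInstanceAs (Decidable (x ≠ y ∧ ((x, y) ∈ andEdges ∨ (y, x) ∈ andEdges)))

def andInputFlip (g : Fin 2) : andGadget ≃g andGadget where
  toEquiv := match g with
    | 0 => swap 0 1 * swap 4 7 * swap 5 6 * swap 8 9
    | 1 => swap 2 3 * swap 4 6 * swap 5 7 * swap 8 9
  map_rel_iff' {x y} := by revert g x y; decide

theorem andColor_andInputFlip (g : Fin 2) (x : Fin 10) :
    andColor (andInputFlip g x) = andColor x := by
  revert g x; decide

/-- For each input gate of the AND₂ gadget there is a color-preserving
automorphism swapping the two vertices of that input gate and the two output vertices,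
while fixing both vertices of the other input gate. -/
theorem stmt_8 : ∀ g : Fin 2, ∃ f : Fin 10 ≃ Fin 10,
    (∀ x y, andGadget.Adj (f x) (f y) ↔ andGadget.Adj x y) ∧
    (∀ x, andColor (f x) = andColor x) ∧
    (g = 0 → f 0 = 1 ∧ f 1 = 0 ∧ f 2 = 2 ∧ f 3 = 3) ∧
    (g = 1 → f 2 = 3 ∧ f 3 = 2 ∧ f 0 = 0 ∧ f 1 = 1) ∧
    f 8 = 9 ∧ f 9 = 8 := by
  intro g
  refine ⟨(andInputFlip g).toEquiv, fun _ _ => (andInputFlip g).map_adj_iff,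
    andColor_andInputFlip g, ?_⟩
  revert g
  decide
end

section
/- In the AND₂ gadget graph, if both vertices of one input gate share a color (that input gate is not activated), then in the stable coloring under color refinement the two output vertices a₀ and a₁ receive the same color. -/
/-- A coloring `π` is equitable for `G` if equally colored vertices have, for every
color `c`, the same number of `c`-colored neighbors. -/
def Equitable {V C : Type*} (G : SimpleGraph V) (π : V → C) : Prop :=
  ∀ x y, π x = π y → ∀ c : C,
    {z | G.Adj x z ∧ π z = c}.ncard = {z | G.Adj y z ∧ π z = c}.ncard

/-- `π` refines `α` (is finer than `α`). -/
def Refines {V C D : Type*} (π : V → C) (α : V → D) : Prop :=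
  ∀ x y, π x = π y → α x = α y

namespace SimpleGraph

variable {V C : Type*} (G : SimpleGraph V)

def colorAut (α : V → C) : Subgroup (G ≃g G) where
  carrier := {φ | ∀ v, α (φ v) = α v}
  mul_mem' {φ ψ} hφ hψ v := (hφ (ψ v)).trans (hψ v)
  one_mem' _ := rfl
  inv_mem' {φ} hφ v := by simpa using (hφ (φ⁻¹ v)).symm

lemma ncard_adj_color_apply (φ : G ≃g G) {π : V → C} (hπ : ∀ v, π (φ v) = π v) (x : V)
    (c : C) : {z | G.Adj (φ x) z ∧ π z = c}.ncard = {z | G.Adj x z ∧ π z = c}.ncard := by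
  have himage : {z | G.Adj (φ x) z ∧ π z = c} = φ '' {z | G.Adj x z ∧ π z = c} := by
    ext z
    obtain ⟨w, rfl⟩ := φ.surjective z
    simp [hπ, Iso.map_adj_iff]
  rw [himage, Set.ncard_image_of_injective _ φ.injective]

lemma equitable_orbitRel (H : Subgroup (G ≃g G)) :
    Equitable G (Quotient.mk (MulAction.orbitRel H V)) := by
  intro x y hxy c
  obtain ⟨φ, rfl⟩ := MulAction.mem_orbit_iff.mp (Quotient.exact hxy)
  exact ncard_adj_color_apply G φ (fun v => Quotient.sound (MulAction.mem_orbit v φ)) y c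

lemma refines_orbitRel_colorAut (α : V → C) :
    Refines (Quotient.mk (MulAction.orbitRel (G.colorAut α) V)) α := by
  intro x y hxy
  obtain ⟨⟨φ, hφ⟩, rfl⟩ := MulAction.mem_orbit_iff.mp (Quotient.exact hxy)
  exact hφ y

theorem apply_eq_of_coarsest {V : Type} {C D : Type*} {G : SimpleGraph V} {α : V → D}
    {π : V → C}
    (hcoarse : ∀ (C' : Type) (π' : V → C'), Equitable G π' → Refines π' α → Refines π' π)
    (φ : G ≃g G) (hφ : ∀ v, α (φ v) = α v) (x : V) : π (φ x) = π x :=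
  hcoarse _ _ (equitable_orbitRel G _) (refines_orbitRel_colorAut G α) _ _
    (Quotient.sound (MulAction.mem_orbit x (⟨φ, hφ⟩ : G.colorAut α)))

end SimpleGraph

instance inst_s10 : DecidableRel andGadget.Adj := fun x y =>
  decidable_of_iff (x ≠ y ∧ ((x, y) ∈ andEdges ∨ (y, x) ∈ andEdges)) Iff.rfl

/-- The reflection b₀ ↔ b₁, c₀ ↔ c₃, c₁ ↔ c₂, a₀ ↔ a₁ of the gadget, fixing input gate 2. -/
def andSwap : andGadget ≃g andGadget where
  toEquiv := Function.Involutive.toPerm ![1, 0, 2, 3, 7, 6, 5, 4, 9, 8]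
    (by unfold Function.Involutive; decide)
  map_rel_iff' := by decide

lemma apply_andSwap {C₀ : Type*} (α : Fin 10 → C₀) (hunsplit : α 0 = α 1)
    (hc45 : α 4 = α 5) (hc56 : α 5 = α 6) (hc67 : α 6 = α 7) (ha : α 8 = α 9) (v : Fin 10) :
    α (andSwap v) = α v := by
  change α (![1, 0, 2, 3, 7, 6, 5, 4, 9, 8] v) = α v
  fin_cases v <;> simp <;> grind

theorem stmt_10_general {C₀ : Type*} (α : Fin 10 → C₀)
    (hunsplit : α 0 = α 1)
    (hc45 : α 4 = α 5) (hc56 : α 5 = α 6) (hc67 : α 6 = α 7) (ha : α 8 = α 9) :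
    ∀ {C : Type} (π : Fin 10 → C), Equitable andGadget π → Refines π α →
      (∀ (C' : Type) (π' : Fin 10 → C'), Equitable andGadget π' → Refines π' α →
        Refines π' π) →
      π 8 = π 9 := by
  intro C π _ _ hcoarse
  exact (SimpleGraph.apply_eq_of_coarsest hcoarse andSwap
    (apply_andSwap α hunsplit hc45 hc56 hc67 ha) 8).symm

/-- If in the initial coloring of the AND₂ gadget (refining the gate
coloring, with the middle layer one class and the output gate one class) the two vertices
of input gate 1 share a color (that gate is not activated), then the coarsest equitable
coloring refining it gives the two output vertices a₀ = 8 and a₁ = 9 the same color. -/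
theorem stmt_10 {C₀ : Type*} (α : Fin 10 → C₀)
    (hgates : Refines α andColor) (hunsplit : α 0 = α 1)
    (hc45 : α 4 = α 5) (hc56 : α 5 = α 6) (hc67 : α 6 = α 7) (ha : α 8 = α 9) :
    ∀ {C : Type} (π : Fin 10 → C), Equitable andGadget π → Refines π α →
      (∀ (C' : Type) (π' : Fin 10 → C'), Equitable andGadget π' → Refines π' α →
        Refines π' π) →
      π 8 = π 9 :=
  stmt_10_general α hunsplit hc45 hc56 hc67 ha
end

section
/- A directed cycle C_n realized as an undirected colored graph — with n base vertices of color 0 and, for each cycle edge, two auxiliary vertices of colors d₁ and d₂ forming a path b_i — d_{1,i} — d_{2,i} — b_{i+1} — has automorphism group (of the colored graph) isomorphic to the cyclic group Z/n, acting regularly on the base vertices. -/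
/-- The "directed edge" relation of the symmetry cycle of length n: vertices are pairs
(j, i) with j ∈ Fin 3 the color (j = 0: base vertex bᵢ, j = 1: auxiliary vertex d₁ᵢ,
j = 2: auxiliary vertex d₂ᵢ) and i ∈ Fin n the position; edges bᵢ—d₁ᵢ, d₁ᵢ—d₂ᵢ,
d₂ᵢ—b_{i+1}. -/
def symRel {n : ℕ} [NeZero n] (x y : Fin 3 × Fin n) : Prop :=
  (x.1 = 0 ∧ y.1 = 1 ∧ y.2 = x.2) ∨ (x.1 = 1 ∧ y.1 = 2 ∧ y.2 = x.2) ∨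
    (x.1 = 2 ∧ y.1 = 0 ∧ y.2 = x.2 + 1)

/-- The symmetry cycle of length n as an undirected colored graph; the color of a vertex
is its first coordinate. -/
def symCycle (n : ℕ) [NeZero n] : SimpleGraph (Fin 3 × Fin n) where
  Adj x y := x ≠ y ∧ (symRel x y ∨ symRel y x)
  symm := ⟨fun _ _ h => ⟨h.1.symm, h.2.symm⟩⟩
  loopless := ⟨fun _ h => h.1 rfl⟩

/-!
Walking along the cycle `b₀, d₁₀, d₂₀, b₁, …`, each vertex has exactly one neighbour of the
next color, so a color-preserving automorphism commutes with the successor map `next`. Such an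
automorphism is therefore determined by the image of a single base vertex, and the rotations
realise every possible image.
-/

namespace SymCycle

variable {n : ℕ} [NeZero n]

def next (x : Fin 3 × Fin n) : Fin 3 × Fin n :=
  (x.1 + 1, if x.1 = 2 then x.2 + 1 else x.2)

lemma next_base (i : Fin n) : next (0, i) = (1, i) := rfl

lemma next_next_base (i : Fin n) : next (next (0, i)) = (2, i) := rfl

lemma next_next_next_base (i : Fin n) : next (next (next (0, i))) = (0, i + 1) := by
  simp [next]

/-- Between consecutive colors the only edge out of `x` goes to `next x`: an edge in the
other direction would join colors differing by `2`. -/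
lemma adj_iff_eq_next {x y : Fin 3 × Fin n} (hy : y.1 = x.1 + 1) :
    (symCycle n).Adj x y ↔ y = next x := by
  obtain ⟨j, i⟩ := x
  obtain ⟨k, m⟩ := y
  subst hy
  fin_cases j <;> simp [symCycle, symRel, next, Prod.ext_iff, eq_comm]

def IsColorAut (f : (Fin 3 × Fin n) ≃ (Fin 3 × Fin n)) : Prop :=
  (∀ x y, (symCycle n).Adj (f x) (f y) ↔ (symCycle n).Adj x y) ∧ ∀ x, (f x).1 = x.1

lemma IsColorAut.map_next {f : (Fin 3 × Fin n) ≃ (Fin 3 × Fin n)} (hf : IsColorAut f)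
    (x : Fin 3 × Fin n) : f (next x) = next (f x) := by
  have hcol : (f (next x)).1 = (f x).1 + 1 := by rw [hf.2, hf.2]; rfl
  exact (adj_iff_eq_next hcol).1 ((hf.1 _ _).2 ((adj_iff_eq_next rfl).2 rfl))

open Fin.NatCast in
lemma IsColorAut.ext_of_apply_base_eq {f g : (Fin 3 × Fin n) ≃ (Fin 3 × Fin n)}
    (hf : IsColorAut f) (hg : IsColorAut g) {i : Fin n} (h : f (0, i) = g (0, i)) : f = g := by
  have hbase (k : ℕ) : f (0, i + k) = g (0, i + k) := by
    induction k with
    | zero => simpa using h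
    | succ k ih =>
      rw [Nat.cast_succ, ← add_assoc, ← next_next_next_base, hf.map_next, hf.map_next,
        hf.map_next, ih, hg.map_next, hg.map_next, hg.map_next]
  ext1 ⟨j, m⟩
  have hm : f (0, m) = g (0, m) := by simpa using hbase (m - i).val
  fin_cases j
  · exact hm
  · change f (1, m) = g (1, m)
    rw [← next_base, hf.map_next, hg.map_next, hm]
  · change f (2, m) = g (2, m)
    rw [← next_next_base, hf.map_next, hf.map_next, hg.map_next, hg.map_next, hm]

def rotate (t : Fin n) : (Fin 3 × Fin n) ≃ (Fin 3 × Fin n) :=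
  (Equiv.refl (Fin 3)).prodCongr (Equiv.addRight t)

lemma rotate_apply (t : Fin n) (x : Fin 3 × Fin n) : rotate t x = (x.1, x.2 + t) := rfl

lemma symRel_rotate_iff (t : Fin n) (x y : Fin 3 × Fin n) :
    symRel (rotate t x) (rotate t y) ↔ symRel x y := by
  simp [symRel, rotate_apply, add_right_comm _ t 1]

lemma isColorAut_rotate (t : Fin n) : IsColorAut (rotate t) := by
  refine ⟨fun x y => ?_, fun x => rfl⟩
  simp only [symCycle, symRel_rotate_iff, ne_eq, EmbeddingLike.apply_eq_iff_eq]

lemma IsColorAut.eq_rotate {f : (Fin 3 × Fin n) ≃ (Fin 3 × Fin n)} (hf : IsColorAut f) :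
    f = rotate (f (0, 0)).2 :=
  hf.ext_of_apply_base_eq (isColorAut_rotate _) (i := 0) (Prod.ext (hf.2 _) (zero_add _).symm)

end SymCycle

open SymCycle in
/-- The color-preserving automorphisms of the symmetry cycle of length n
are exactly the n rotations: every automorphism is rotation by a unique t ∈ Z/n, every
rotation is an automorphism (so the automorphism group is isomorphic to Z/n), and the
automorphism group acts regularly on the base vertices. -/
theorem stmt_19 (n : ℕ) [NeZero n] :
    (∀ f : (Fin 3 × Fin n) ≃ (Fin 3 × Fin n),
      ((∀ x y, (symCycle n).Adj (f x) (f y) ↔ (symCycle n).Adj x y) ∧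
        ∀ x, (f x).1 = x.1) →
      ∃! t : Fin n, ∀ x, f x = (x.1, x.2 + t)) ∧
    (∀ t : Fin n, ∃ f : (Fin 3 × Fin n) ≃ (Fin 3 × Fin n),
      ((∀ x y, (symCycle n).Adj (f x) (f y) ↔ (symCycle n).Adj x y) ∧
        ∀ x, (f x).1 = x.1) ∧ ∀ x, f x = (x.1, x.2 + t)) ∧
    (∀ i₁ i₂ : Fin n, ∃! f : (Fin 3 × Fin n) ≃ (Fin 3 × Fin n),
      ((∀ x y, (symCycle n).Adj (f x) (f y) ↔ (symCycle n).Adj x y) ∧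
        ∀ x, (f x).1 = x.1) ∧ f (0, i₁) = (0, i₂)) := by
  have hrot (i₁ i₂ : Fin n) : rotate (i₂ - i₁) (0, i₁) = (0, i₂) :=
    Prod.ext rfl (add_sub_cancel i₁ i₂)
  refine ⟨fun f hf => ?_, fun t => ⟨rotate t, isColorAut_rotate t, rotate_apply t⟩,
    fun i₁ i₂ => ⟨rotate (i₂ - i₁), ⟨isColorAut_rotate _, hrot i₁ i₂⟩, ?_⟩⟩
  · refine ⟨(f (0, 0)).2, Equiv.ext_iff.mp (IsColorAut.eq_rotate hf), fun t ht => ?_⟩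
    simpa using congrArg Prod.snd (ht (0, 0)).symm
  · rintro g ⟨hg, hgi⟩
    exact IsColorAut.ext_of_apply_base_eq hg (isColorAut_rotate _) (hgi.trans (hrot i₁ i₂).symm)
end
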